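/- arXiv:2203.14931 — 7 statements merged into one kernel-verified Lean document; each statement's English description precedes it below -/
import Mathlib

section
/- Let r > 1, set λ = √(r² − 1)/r, and let c₁, c₂, c₃ ∈ ℝ satisfy c₁² + c₂² = 1. Define D(s) = c₁/r + cosh(λs + c₃) and v¹(s) = −λ·sinh(λs + c₃)/D(s), v²(s) = (c₁ + (1/r)·cosh(λs + c₃))/D(s), v³(s) = λ·c₂/D(s). Then D(s) > 0 for every s ∈ ℝ, and (v¹, v², v³) solves the circular-tractrix ODE system with parameter r, including the unit-length constraint (v¹(s))² + (v²(s))² + (v³(s))² = 1 for all s ∈ ℝ. -/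
/-- The circular-tractrix ODE system with parameter `r`. -/
def SolvesCircularTractrix (r : ℝ) (v1 v2 v3 : ℝ → ℝ) : Prop :=
  (∀ s : ℝ, HasDerivAt v1 ((1 / r) * v2 s + (v1 s) ^ 2 - 1) s) ∧
  (∀ s : ℝ, HasDerivAt v2 (-(1 / r) * v1 s + v1 s * v2 s) s) ∧
  (∀ s : ℝ, HasDerivAt v3 (v1 s * v3 s) s)

/-! Write `C = cosh (lam * s + c₃)` and `S = sinh (lam * s + c₃)`. As `c₁ ^ 2 ≤ 1 < r ^ 2`, the
denominator satisfies `D ≥ 1 + c₁ / r > 0`. After clearing `D`, each ODE and the unit-length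
constraint become polynomial identities in `C`, `S`, which follow from `C ^ 2 - S ^ 2 = 1` and
`lam ^ 2 + (1 / r) ^ 2 = 1`. -/

open Real

theorem hasDerivAt_cosh_mul_add (a b s : ℝ) :
    HasDerivAt (fun s => cosh (a * s + b)) (a * sinh (a * s + b)) s := by
  simpa [mul_comm] using (((hasDerivAt_id s).const_mul a).add_const b).cosh

theorem hasDerivAt_sinh_mul_add (a b s : ℝ) :
    HasDerivAt (fun s => sinh (a * s + b)) (a * cosh (a * s + b)) s := by
  simpa [mul_comm] using (((hasDerivAt_id s).const_mul a).add_const b).sinh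

theorem sqrt_sq_sub_one_div_sq_add_one_div_sq {r : ℝ} (hr : 1 ≤ r) :
    (√(r ^ 2 - 1) / r) ^ 2 + (1 / r) ^ 2 = 1 := by
  have hr0 : r ≠ 0 := by positivity
  rw [div_pow, sq_sqrt (by nlinarith)]
  field_simp
  ring

theorem div_add_cosh_pos {a r : ℝ} (ha : a ^ 2 ≤ 1) (hr : 1 < r) (x : ℝ) :
    0 < a / r + cosh x := by
  have ha' : -1 < a / r := by
    rw [lt_div_iff₀ (by linarith)]
    nlinarith
  linarith [one_le_cosh x]

section CircularTractrix

variable {r c₁ c₂ c₃ lam : ℝ} {D v1 v2 v3 : ℝ → ℝ}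

theorem hasDerivAt_tractrix_denom (hD : ∀ s, D s = c₁ / r + cosh (lam * s + c₃)) (s : ℝ) :
    HasDerivAt D (lam * sinh (lam * s + c₃)) s := by
  rw [show D = _ from funext hD]
  exact (hasDerivAt_cosh_mul_add lam c₃ s).const_add _

theorem hasDerivAt_tractrix_v1 (hlam : lam ^ 2 + (1 / r) ^ 2 = 1)
    (hD : ∀ s, D s = c₁ / r + cosh (lam * s + c₃))
    (hv1 : ∀ s, v1 s = -(lam * sinh (lam * s + c₃)) / D s)
    (hv2 : ∀ s, v2 s = (c₁ + (1 / r) * cosh (lam * s + c₃)) / D s) {s : ℝ} (hDs : D s ≠ 0) :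
    HasDerivAt v1 ((1 / r) * v2 s + (v1 s) ^ 2 - 1) s := by
  refine ((((hasDerivAt_sinh_mul_add lam c₃ s).const_mul lam).neg.div
    (hasDerivAt_tractrix_denom hD s) hDs).congr_deriv ?_).congr_of_eventuallyEq
    (.of_forall hv1)
  rw [hv1, hv2]
  rw [hD] at hDs ⊢
  simp only [Pi.neg_apply]
  field_simp
  linear_combination (-(c₁ / r + cosh (lam * s + c₃)) * cosh (lam * s + c₃)) * hlam

theorem hasDerivAt_tractrix_v2 (hD : ∀ s, D s = c₁ / r + cosh (lam * s + c₃))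
    (hv1 : ∀ s, v1 s = -(lam * sinh (lam * s + c₃)) / D s)
    (hv2 : ∀ s, v2 s = (c₁ + (1 / r) * cosh (lam * s + c₃)) / D s) {s : ℝ} (hDs : D s ≠ 0) :
    HasDerivAt v2 (-(1 / r) * v1 s + v1 s * v2 s) s := by
  refine (((((hasDerivAt_cosh_mul_add lam c₃ s).const_mul (1 / r)).const_add c₁).div
    (hasDerivAt_tractrix_denom hD s) hDs).congr_deriv ?_).congr_of_eventuallyEq
    (.of_forall hv2)
  rw [hv1, hv2]
  rw [hD] at hDs ⊢
  field_simp
  ring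

theorem hasDerivAt_tractrix_v3 (hD : ∀ s, D s = c₁ / r + cosh (lam * s + c₃))
    (hv1 : ∀ s, v1 s = -(lam * sinh (lam * s + c₃)) / D s)
    (hv3 : ∀ s, v3 s = lam * c₂ / D s) {s : ℝ} (hDs : D s ≠ 0) :
    HasDerivAt v3 (v1 s * v3 s) s := by
  refine (((hasDerivAt_const s (lam * c₂)).div
    (hasDerivAt_tractrix_denom hD s) hDs).congr_deriv ?_).congr_of_eventuallyEq
    (.of_forall hv3)
  rw [hv1, hv3]
  field_simp
  ring

theorem tractrix_sq_add_sq_add_sq (hlam : lam ^ 2 + (1 / r) ^ 2 = 1) (hc : c₁ ^ 2 + c₂ ^ 2 = 1)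
    (hD : ∀ s, D s = c₁ / r + cosh (lam * s + c₃))
    (hv1 : ∀ s, v1 s = -(lam * sinh (lam * s + c₃)) / D s)
    (hv2 : ∀ s, v2 s = (c₁ + (1 / r) * cosh (lam * s + c₃)) / D s)
    (hv3 : ∀ s, v3 s = lam * c₂ / D s) {s : ℝ} (hDs : D s ≠ 0) :
    (v1 s) ^ 2 + (v2 s) ^ 2 + (v3 s) ^ 2 = 1 := by
  rw [hv1, hv2, hv3]
  rw [hD] at hDs ⊢
  field_simp
  linear_combination (cosh (lam * s + c₃) ^ 2 + c₂ ^ 2 - 1) * hlam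
    + (1 - (1 / r) ^ 2) * hc - lam ^ 2 * cosh_sq_sub_sinh_sq (lam * s + c₃)

end CircularTractrix

theorem stmt0 (r c₁ c₂ c₃ lam : ℝ) (hr : 1 < r)
    (hc : c₁ ^ 2 + c₂ ^ 2 = 1)
    (hlam : lam = Real.sqrt (r ^ 2 - 1) / r)
    (D v1 v2 v3 : ℝ → ℝ)
    (hD : ∀ s, D s = c₁ / r + Real.cosh (lam * s + c₃))
    (hv1 : ∀ s, v1 s = -(lam * Real.sinh (lam * s + c₃)) / D s)
    (hv2 : ∀ s, v2 s = (c₁ + (1 / r) * Real.cosh (lam * s + c₃)) / D s)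
    (hv3 : ∀ s, v3 s = lam * c₂ / D s) :
    (∀ s : ℝ, 0 < D s) ∧
    SolvesCircularTractrix r v1 v2 v3 ∧
    (∀ s : ℝ, (v1 s) ^ 2 + (v2 s) ^ 2 + (v3 s) ^ 2 = 1) := by
  have hlam' : lam ^ 2 + (1 / r) ^ 2 = 1 :=
    hlam ▸ sqrt_sq_sub_one_div_sq_add_one_div_sq hr.le
  have hDpos : ∀ s, 0 < D s := fun s => hD s ▸ div_add_cosh_pos (by nlinarith) hr _
  have hDne : ∀ s, D s ≠ 0 := fun s => (hDpos s).ne'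
  exact ⟨hDpos,
    ⟨fun s => hasDerivAt_tractrix_v1 hlam' hD hv1 hv2 (hDne s),
      fun s => hasDerivAt_tractrix_v2 hD hv1 hv2 (hDne s),
      fun s => hasDerivAt_tractrix_v3 hD hv1 hv3 (hDne s)⟩,
    fun s => tractrix_sq_add_sq_add_sq hlam' hc hD hv1 hv2 hv3 (hDne s)⟩
end

section
/- Let r > 1 and set λ = √(r² − 1)/r. Suppose differentiable functions v¹, v², v³ : ℝ → ℝ solve the circular-tractrix ODE system with parameter r and satisfy (v¹(s))² + (v²(s))² + (v³(s))² = 1 for all s ∈ ℝ. Then either there exist constants c₁, c₂, c₃ ∈ ℝ with c₁² + c₂² = 1 such that for all s: v¹(s) = −λ·sinh(λs + c₃)/D(s), v²(s) = (c₁ + (1/r)·cosh(λs + c₃))/D(s), v³(s) = λ·c₂/D(s) with D(s) = c₁/r + cosh(λs + c₃); or there exists ε ∈ {1, −1} such that v¹ ≡ ε·√(r² − 1)/r, v² ≡ 1/r, v³ ≡ 0. -/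
open Real

theorem eq_of_hasDerivAt_zero {f : ℝ → ℝ} (hf : ∀ x, HasDerivAt f 0 x) (x y : ℝ) :
    f x = f y :=
  is_const_of_deriv_eq_zero (fun z => (hf z).differentiableAt) (fun z => (hf z).deriv) x y

theorem eq_mul_exp_of_hasDerivAt {f : ℝ → ℝ} {c : ℝ} (hf : ∀ x, HasDerivAt f (c * f x) x)
    (x : ℝ) : f x = f 0 * exp (c * x) := by
  have hconst : ∀ y, HasDerivAt (fun u => f u * exp (-(c * u))) 0 y := fun y => by
    have hexp : HasDerivAt (fun u => exp (-(c * u))) (exp (-(c * y)) * -c) y :=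
      (((hasDerivAt_id y).const_mul c).neg.congr_deriv (by simp)).exp
    exact ((hf y).mul hexp).congr_deriv (by ring)
  have h := eq_of_hasDerivAt_zero hconst x 0
  simp only [mul_zero, neg_zero, exp_zero, mul_one] at h
  rw [← h, mul_assoc, ← exp_add, neg_add_cancel, exp_zero, mul_one]

theorem eq_cosh_sinh_of_hasDerivAt {lam : ℝ} (hl : lam ≠ 0) {W W' : ℝ → ℝ}
    (hW : ∀ s, HasDerivAt W (W' s) s) (hW' : ∀ s, HasDerivAt W' (lam ^ 2 * W s) s) (s : ℝ) :
    W s = W 0 * cosh (lam * s) + W' 0 / lam * sinh (lam * s) := by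
  have hplus := eq_mul_exp_of_hasDerivAt (f := fun u => W' u + lam * W u) (c := lam)
    (fun x => ((hW' x).add ((hW x).const_mul lam)).congr_deriv (by ring)) s
  have hminus := eq_mul_exp_of_hasDerivAt (f := fun u => W' u - lam * W u) (c := -lam)
    (fun x => ((hW' x).sub ((hW x).const_mul lam)).congr_deriv (by ring)) s
  rw [neg_mul] at hminus
  rw [cosh_eq, sinh_eq]
  field_simp
  linear_combination hplus - hminus

theorem exists_cosh_add_eq {α β : ℝ} (h : |β| < α) :
    ∃ K c : ℝ, 0 < K ∧ ∀ x, α * cosh x + β * sinh x = K * cosh (x + c) := by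
  have hα : 0 < α := (abs_nonneg β).trans_lt h
  have ht : β / α ∈ Set.Ioo (-1) 1 := by
    rw [Set.mem_Ioo, lt_div_iff₀ hα, div_lt_iff₀ hα]
    constructor <;> linarith [neg_abs_le β, le_abs_self β]
  have hq : 0 < √(1 - (β / α) ^ 2) := sqrt_pos.2 (by nlinarith [ht.1, ht.2])
  refine ⟨α * √(1 - (β / α) ^ 2), artanh (β / α), mul_pos hα hq, fun x => ?_⟩
  rw [cosh_add, cosh_artanh ht, sinh_artanh ht]
  generalize √(1 - (β / α) ^ 2) = q at hq ⊢
  field_simp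

theorem exists_lt_cosh (y : ℝ) : ∃ x, y < cosh x :=
  ⟨arcosh (max y 1 + 1), by
    rw [cosh_arcosh (by linarith [le_max_right y 1])]
    linarith [le_max_left y 1]⟩

theorem exists_pos_mul_cosh_of_hasDerivAt {lam C : ℝ} (hl : lam ≠ 0) {W W' : ℝ → ℝ}
    (hW : ∀ s, HasDerivAt W (W' s) s) (hW' : ∀ s, HasDerivAt W' (lam ^ 2 * W s) s)
    (hinv : W' 0 ^ 2 < lam ^ 2 * W 0 ^ 2) (hbdd : ∀ s, C < W s) :
    ∃ K c, 0 < K ∧ ∀ s, W s = K * cosh (lam * s + c) := by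
  have hWcs := eq_cosh_sinh_of_hasDerivAt hl hW hW'
  have hαβ : |W' 0 / lam| < |W 0| := by
    rw [← sq_lt_sq, div_pow, div_lt_iff₀ (by positivity)]
    linarith
  rcases lt_or_ge 0 (W 0) with hα | hα
  · obtain ⟨K, c, hK, hKc⟩ := exists_cosh_add_eq (hαβ.trans_eq (abs_of_pos hα))
    exact ⟨K, c, hK, fun s => (hWcs s).trans (hKc _)⟩
  -- Otherwise `W = -K cosh (lam s + c)`, which is not bounded below.
  · obtain ⟨K, c, hK, hKc⟩ := exists_cosh_add_eq (α := -W 0) (β := -(W' 0 / lam))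
      (by rwa [abs_neg, ← abs_of_nonpos hα])
    obtain ⟨x, hx⟩ := exists_lt_cosh (-C / K)
    have hWx := hWcs ((x - c) / lam)
    rw [mul_div_cancel₀ _ hl] at hWx
    have := hKc (x - c)
    rw [sub_add_cancel] at this
    rw [div_lt_iff₀ hK] at hx
    linarith [hbdd ((x - c) / lam)]

theorem exists_sign_of_sq_eq {f : ℝ → ℝ} {c : ℝ} (hf : Continuous f) (hc : c ≠ 0)
    (h : ∀ x, f x ^ 2 = c ^ 2) : ∃ ε : ℝ, (ε = 1 ∨ ε = -1) ∧ ∀ x, f x = ε * c := by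
  rcases isPreconnected_univ.eq_or_eq_neg_of_sq_eq hf.continuousOn continuousOn_const
    (fun x _ => h x) (fun _ => hc) with hpos | hneg
  · exact ⟨1, Or.inl rfl, fun x => (hpos (Set.mem_univ x)).trans (one_mul c).symm⟩
  · exact ⟨-1, Or.inr rfl, fun x => (hneg (Set.mem_univ x)).trans (neg_one_mul c).symm⟩

theorem exists_pos_hasDerivAt_neg_mul_self {f : ℝ → ℝ} (hf : Continuous f) :
    ∃ D : ℝ → ℝ, (∀ s, 0 < D s) ∧ ∀ s, HasDerivAt D (-f s * D s) s :=
  ⟨fun s => exp (-∫ t in (0 : ℝ)..s, f t), fun _ => exp_pos _, fun s =>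
    (hf.integral_hasStrictDerivAt 0 s).hasDerivAt.neg.exp.congr_deriv
      (by simp only [Pi.neg_apply]; ring)⟩

namespace SolvesCircularTractrix

variable {r : ℝ} {v1 v2 v3 D : ℝ → ℝ}

theorem continuous_v1 (h : SolvesCircularTractrix r v1 v2 v3) : Continuous v1 :=
  continuous_iff_continuousAt.2 fun s => (h.1 s).continuousAt

theorem v2_sub_inv_mul_eq (h : SolvesCircularTractrix r v1 v2 v3)
    (hD : ∀ s, HasDerivAt D (-v1 s * D s) s) (s : ℝ) :
    (v2 s - 1 / r) * D s = (v2 0 - 1 / r) * D 0 :=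
  eq_of_hasDerivAt_zero (fun x => (((h.2.1 x).sub_const _).mul (hD x)).congr_deriv (by ring)) s 0

theorem v3_mul_eq (h : SolvesCircularTractrix r v1 v2 v3)
    (hD : ∀ s, HasDerivAt D (-v1 s * D s) s) (s : ℝ) : v3 s * D s = v3 0 * D 0 :=
  eq_of_hasDerivAt_zero (fun x => ((h.2.2 x).mul (hD x)).congr_deriv (by ring)) s 0

theorem hasDerivAt_neg_v1_mul (h : SolvesCircularTractrix r v1 v2 v3)
    (hD : ∀ s, HasDerivAt D (-v1 s * D s) s) (s : ℝ) :
    HasDerivAt (fun u => -v1 u * D u) ((1 - v2 s / r) * D s) s :=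
  ((h.1 s).neg.mul (hD s)).congr_deriv (by simp only [Pi.neg_apply]; ring)

theorem exists_eq_add_mul_cosh (h : SolvesCircularTractrix r v1 v2 v3)
    (hunit : ∀ s, v1 s ^ 2 + v2 s ^ 2 + v3 s ^ 2 = 1) (hDpos : ∀ s, 0 < D s)
    (hD : ∀ s, HasDerivAt D (-v1 s * D s) s) (hr : r ≠ 0) {lam a b m : ℝ} (hlam : 0 < lam)
    (hlam2 : lam ^ 2 = 1 - 1 / r ^ 2) (hA : ∀ s, (v2 s - 1 / r) * D s = a)
    (hB : ∀ s, v3 s * D s = b) (hab : ¬(a = 0 ∧ b = 0)) (hm : a = r * lam ^ 2 * m) :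
    ∃ K c : ℝ, 0 < K ∧ lam ^ 2 * K ^ 2 = lam ^ 2 * m ^ 2 + a ^ 2 + b ^ 2 ∧
      ∀ s, D s = m + K * cosh (lam * s + c) ∧ -v1 s * D s = K * lam * sinh (lam * s + c) := by
  have hW' : ∀ s, HasDerivAt (fun u => -v1 u * D u) (lam ^ 2 * (D s - m)) s := fun s =>
    (h.hasDerivAt_neg_v1_mul hD s).congr_deriv (by
      linear_combination (norm := (field_simp; ring)) (-1 / r) * hA s - D s * hlam2 - 1 / r * hm)
  have hinv : ∀ s,
      lam ^ 2 * (D s - m) ^ 2 - (-v1 s * D s) ^ 2 = lam ^ 2 * m ^ 2 + a ^ 2 + b ^ 2 := fun s => by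
    linear_combination (norm := (field_simp; ring)) D s ^ 2 * hlam2 - D s ^ 2 * hunit s +
      (v2 s * D s + a + D s / r) * hA s + (v3 s * D s + b) * hB s + 2 * D s / r * hm
  have hab2 : 0 < a * a + b * b :=
    lt_of_le_of_ne (add_nonneg (mul_self_nonneg a) (mul_self_nonneg b))
      (Ne.symm (mt mul_self_add_mul_self_eq_zero.1 hab))
  obtain ⟨K, c, hK, hWK⟩ := exists_pos_mul_cosh_of_hasDerivAt (C := -m) hlam.ne'
    (fun s => (hD s).sub_const m) hW' (by nlinarith [hinv 0, sq_nonneg (lam * m)])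
    (fun s => by linarith [hDpos s])
  have hW'K : ∀ s, -v1 s * D s = K * lam * sinh (lam * s + c) := fun s => by
    have hcosh : HasDerivAt (fun u => K * cosh (lam * u + c)) (K * lam * sinh (lam * s + c)) s :=
      ((((hasDerivAt_id s).const_mul lam).add_const c).cosh.const_mul K).congr_deriv
        (by simp only [id]; ring)
    exact ((hD s).sub_const m).unique (by rwa [← funext hWK] at hcosh)
  refine ⟨K, c, hK, ?_, fun s => ⟨by linarith [hWK s], hW'K s⟩⟩
  have := hinv 0
  rw [hWK 0, hW'K 0] at this
  linear_combination this - lam ^ 2 * K ^ 2 * cosh_sq_sub_sinh_sq (lam * 0 + c)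

theorem exists_eq_cosh (h : SolvesCircularTractrix r v1 v2 v3)
    (hunit : ∀ s, v1 s ^ 2 + v2 s ^ 2 + v3 s ^ 2 = 1) (hDpos : ∀ s, 0 < D s)
    (hD : ∀ s, HasDerivAt D (-v1 s * D s) s) (hr : r ≠ 0) {lam a b : ℝ} (hlam : 0 < lam)
    (hlam2 : lam ^ 2 = 1 - 1 / r ^ 2) (hA : ∀ s, (v2 s - 1 / r) * D s = a)
    (hB : ∀ s, v3 s * D s = b) (hab : ¬(a = 0 ∧ b = 0)) :
    ∃ c₁ c₂ c₃ : ℝ, c₁ ^ 2 + c₂ ^ 2 = 1 ∧ ∀ s : ℝ,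
      v1 s = -(lam * sinh (lam * s + c₃)) / (c₁ / r + cosh (lam * s + c₃)) ∧
      v2 s = (c₁ + (1 / r) * cosh (lam * s + c₃)) / (c₁ / r + cosh (lam * s + c₃)) ∧
      v3 s = lam * c₂ / (c₁ / r + cosh (lam * s + c₃)) := by
  obtain ⟨m, hm⟩ : ∃ m, a = r * lam ^ 2 * m := ⟨a / (r * lam ^ 2), by field_simp⟩
  obtain ⟨K, c, hK, hK2, hDK⟩ :=
    h.exists_eq_add_mul_cosh hunit hDpos hD hr hlam hlam2 hA hB hab hm
  refine ⟨r * m / K, b / (K * lam), c, ?_, fun s => ?_⟩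
  · linear_combination (norm := (field_simp; ring))
      (-hK2 - (a + r * lam ^ 2 * m) * hm - lam ^ 2 * m ^ 2 * r ^ 2 * hlam2) / (K ^ 2 * lam ^ 2)
  obtain ⟨hDs, hv1D⟩ := hDK s
  have hden : r * m / K / r + cosh (lam * s + c) = D s / K := by field_simp; linarith
  rw [hden]
  have hD0 := (hDpos s).ne'
  refine ⟨?_, ?_, ?_⟩
  · linear_combination (norm := (field_simp; ring)) -hv1D / D s
  · linear_combination (norm := (field_simp; ring)) (hA s + hDs / r + hm + m * r * hlam2) / D s
  · linear_combination (norm := (field_simp; ring)) hB s / D s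

end SolvesCircularTractrix

theorem stmt2 (r lam : ℝ) (hr : 1 < r) (hlam : lam = Real.sqrt (r ^ 2 - 1) / r)
    (v1 v2 v3 : ℝ → ℝ)
    (hsol : SolvesCircularTractrix r v1 v2 v3)
    (hunit : ∀ s : ℝ, (v1 s) ^ 2 + (v2 s) ^ 2 + (v3 s) ^ 2 = 1) :
    (∃ c₁ c₂ c₃ : ℝ, c₁ ^ 2 + c₂ ^ 2 = 1 ∧ ∀ s : ℝ,
      v1 s = -(lam * Real.sinh (lam * s + c₃)) / (c₁ / r + Real.cosh (lam * s + c₃)) ∧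
      v2 s = (c₁ + (1 / r) * Real.cosh (lam * s + c₃)) / (c₁ / r + Real.cosh (lam * s + c₃)) ∧
      v3 s = lam * c₂ / (c₁ / r + Real.cosh (lam * s + c₃))) ∨
    (∃ ε : ℝ, (ε = 1 ∨ ε = -1) ∧ ∀ s : ℝ,
      v1 s = ε * Real.sqrt (r ^ 2 - 1) / r ∧ v2 s = 1 / r ∧ v3 s = 0) := by
  have hr0 : 0 < r := by linarith
  have hr2 : 0 < r ^ 2 - 1 := by nlinarith
  have hlam0 : 0 < lam := by rw [hlam]; exact div_pos (sqrt_pos.2 hr2) hr0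
  have hlam2 : lam ^ 2 = 1 - 1 / r ^ 2 := by
    rw [hlam, div_pow, sq_sqrt hr2.le]; field_simp
  obtain ⟨D, hDpos, hD⟩ := exists_pos_hasDerivAt_neg_mul_self hsol.continuous_v1
  have hA := hsol.v2_sub_inv_mul_eq hD
  have hB := hsol.v3_mul_eq hD
  by_cases hab : (v2 0 - 1 / r) * D 0 = 0 ∧ v3 0 * D 0 = 0
  · right
    have hv2 : ∀ s, v2 s = 1 / r := fun s =>
      sub_eq_zero.1 ((mul_eq_zero.1 ((hA s).trans hab.1)).resolve_right (hDpos s).ne')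
    have hv3 : ∀ s, v3 s = 0 := fun s =>
      (mul_eq_zero.1 ((hB s).trans hab.2)).resolve_right (hDpos s).ne'
    obtain ⟨ε, hε, hv1⟩ := exists_sign_of_sq_eq hsol.continuous_v1 hlam0.ne' fun s => by
      linear_combination hunit s - hlam2 - (v2 s + 1 / r) * hv2 s - v3 s * hv3 s
    exact ⟨ε, hε, fun s => ⟨by rw [hv1, hlam, mul_div_assoc], hv2 s, hv3 s⟩⟩
  · left
    exact hsol.exists_eq_cosh hunit hDpos hD hr0.ne' hlam0 hlam2 hA hB hab
end

section
/- Let c₂, c₃ ∈ ℝ and set c₁ = 1 + c₂². Define Q(s) = c₁ + (s + c₃)² and v¹(s) = −2(s + c₃)/Q(s), v²(s) = 1 − 2/Q(s), v³(s) = 2c₂/Q(s). Then Q(s) > 0 for every s ∈ ℝ, and (v¹, v², v³) solves the circular-tractrix ODE system with parameter r = 1, including the unit-length constraint (v¹(s))² + (v²(s))² + (v³(s))² = 1 for all s ∈ ℝ. -/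
/-!
The curve `(v¹, v², v³)` is the inverse stereographic projection (from the pole on the
`v²`-axis) of the straight line `s ↦ (-(s + c₃), c₂)`, whose `1 + |x|²` is `Q` exactly when
`c₁ = 1 + c₂²`; so it lies on the unit sphere.

The ODE system itself holds for any nonvanishing `Q` with `Q' = 2 (s + c₃)`: writing `w = 1 / Q`,
one has `w' = -2 (s + c₃) w²`, and each equation becomes an identity between polynomials in
`s + c₃` and `w`.
-/

lemma hasDerivAt_add_sq_add (c₁ c₃ s : ℝ) :
    HasDerivAt (fun s => c₁ + (s + c₃) ^ 2) (2 * (s + c₃)) s := by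
  simpa using (((hasDerivAt_id' s).add_const c₃).pow 2).const_add c₁

lemma solvesCircularTractrix_one_of_hasDerivAt {Q : ℝ → ℝ} (c₂ c₃ : ℝ)
    (hQ : ∀ s, HasDerivAt Q (2 * (s + c₃)) s) (hQ₀ : ∀ s, Q s ≠ 0) :
    SolvesCircularTractrix 1 (fun s => -(2 * (s + c₃)) / Q s) (fun s => 1 - 2 / Q s)
      (fun s => 2 * c₂ / Q s) := by
  refine ⟨fun s => ?_, fun s => ?_, fun s => ?_⟩
  · refine ((((hasDerivAt_id' s).add_const c₃).const_mul 2).fun_neg.fun_div (hQ s)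
      (hQ₀ s)).congr_deriv ?_
    field_simp [hQ₀ s]
    ring
  · refine (((hasDerivAt_const s 2).fun_div (hQ s) (hQ₀ s)).const_sub 1).congr_deriv ?_
    field_simp [hQ₀ s]
    ring
  · refine ((hasDerivAt_const s (2 * c₂)).fun_div (hQ s) (hQ₀ s)).congr_deriv ?_
    field_simp [hQ₀ s]
    ring

lemma inv_stereographic_sq_add_sq_add_sq (a b : ℝ) :
    (2 * b / (1 + a ^ 2 + b ^ 2)) ^ 2 + (1 - 2 / (1 + a ^ 2 + b ^ 2)) ^ 2
      + (2 * a / (1 + a ^ 2 + b ^ 2)) ^ 2 = 1 := by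
  have : 1 + a ^ 2 + b ^ 2 ≠ 0 := by positivity
  field_simp
  ring

theorem stmt3 (c₁ c₂ c₃ : ℝ) (hc₁ : c₁ = 1 + c₂ ^ 2)
    (Q v1 v2 v3 : ℝ → ℝ)
    (hQ : ∀ s, Q s = c₁ + (s + c₃) ^ 2)
    (hv1 : ∀ s, v1 s = -(2 * (s + c₃)) / Q s)
    (hv2 : ∀ s, v2 s = 1 - 2 / Q s)
    (hv3 : ∀ s, v3 s = 2 * c₂ / Q s) :
    (∀ s : ℝ, 0 < Q s) ∧
    SolvesCircularTractrix 1 v1 v2 v3 ∧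
    (∀ s : ℝ, (v1 s) ^ 2 + (v2 s) ^ 2 + (v3 s) ^ 2 = 1) := by
  have hQ_pos : ∀ s, 0 < Q s := fun s => by rw [hQ, hc₁]; positivity
  obtain rfl : v1 = _ := funext hv1
  obtain rfl : v2 = _ := funext hv2
  obtain rfl : v3 = _ := funext hv3
  obtain rfl : Q = _ := funext hQ
  refine ⟨hQ_pos, solvesCircularTractrix_one_of_hasDerivAt c₂ c₃
    (hasDerivAt_add_sq_add c₁ c₃) (fun s => (hQ_pos s).ne'), fun s => ?_⟩
  subst hc₁
  simpa only [neg_div, neg_sq] using inv_stereographic_sq_add_sq_add_sq c₂ (s + c₃)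
end

section
/- Suppose differentiable functions v¹, v², v³ : ℝ → ℝ solve the circular-tractrix ODE system with parameter r = 1 and satisfy (v¹(s))² + (v²(s))² + (v³(s))² = 1 for all s ∈ ℝ. Then either there exist constants c₂, c₃ ∈ ℝ such that, with c₁ = 1 + c₂² and Q(s) = c₁ + (s + c₃)², one has v¹(s) = −2(s + c₃)/Q(s), v²(s) = 1 − 2/Q(s), v³(s) = 2c₂/Q(s) for all s; or v¹ ≡ 0, v² ≡ 1, v³ ≡ 0. -/
theorem mul_exp_neg_integral_eq_of_hasDerivAt_mul {a w : ℝ → ℝ} (ha : Continuous a)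
    (hw : ∀ x, HasDerivAt w (a x * w x) x) (x : ℝ) :
    w x * Real.exp (-∫ t in (0 : ℝ)..x, a t) = w 0 := by
  set g : ℝ → ℝ := fun x => w x * Real.exp (-∫ t in (0 : ℝ)..x, a t)
  have hg : ∀ x, HasDerivAt g 0 x := fun x =>
    ((hw x).mul (ha.integral_hasStrictDerivAt 0 x).hasDerivAt.neg.exp).congr_deriv (by ring)
  have := is_const_of_deriv_eq_zero (fun x => (hg x).differentiableAt) (fun x => (hg x).deriv) x 0
  simpa [g] using this

theorem forall_eq_zero_or_forall_ne_zero_of_hasDerivAt_mul {a w : ℝ → ℝ} (ha : Continuous a)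
    (hw : ∀ x, HasDerivAt w (a x * w x) x) : (∀ x, w x = 0) ∨ ∀ x, w x ≠ 0 := by
  have hsol := mul_exp_neg_integral_eq_of_hasDerivAt_mul ha hw
  by_cases h0 : w 0 = 0
  · left
    intro x
    simpa [h0, (Real.exp_pos _).ne'] using hsol x
  · right
    intro x hx
    simpa [hx, h0] using (hsol x).symm

theorem hasDerivAt_div_of_hasDerivAt_mul_add {f w : ℝ → ℝ} {a b x : ℝ}
    (hf : HasDerivAt f (a * f x + b * w x) x) (hw : HasDerivAt w (a * w x) x) (hx : w x ≠ 0) :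
    HasDerivAt (fun y => f y / w y) b x := by
  refine (hf.div hw hx).congr_deriv ?_
  field_simp
  ring

theorem eq_add_mul_of_hasDerivAt_const {f : ℝ → ℝ} {c : ℝ} (hf : ∀ x, HasDerivAt f c x)
    (x : ℝ) : f x = f 0 + c * x := by
  have hg : ∀ x, HasDerivAt (fun y => f y - c * y) 0 x := fun x =>
    ((hf x).sub ((hasDerivAt_id x).const_mul c)).congr_deriv (by simp)
  have := is_const_of_deriv_eq_zero (fun x => (hg x).differentiableAt) (fun x => (hg x).deriv) x 0
  simp only [mul_zero, sub_zero] at this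
  linarith

theorem eq_add_mul_mul_of_hasDerivAt_div {f w : ℝ → ℝ} {c : ℝ} (hw : ∀ x, w x ≠ 0)
    (h : ∀ x, HasDerivAt (fun y => f y / w y) c x) (x : ℝ) : f x = (f 0 / w 0 + c * x) * w x := by
  rw [← eq_add_mul_of_hasDerivAt_const h x, div_mul_cancel₀ _ (hw x)]

theorem eq_div_of_sphere {a b w x y z : ℝ} (hw : w ≠ 0) (hx : x = -a * w) (hy : y = 1 - w)
    (hz : z = b * w) (h : x ^ 2 + y ^ 2 + z ^ 2 = 1) :
    x = -(2 * a) / ((1 + b ^ 2) + a ^ 2) ∧ y = 1 - 2 / ((1 + b ^ 2) + a ^ 2) ∧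
      z = 2 * b / ((1 + b ^ 2) + a ^ 2) := by
  have hQ : (1 + b ^ 2) + a ^ 2 ≠ 0 := by positivity
  have hwQ : w * ((1 + b ^ 2) + a ^ 2) = 2 := by
    refine mul_left_cancel₀ hw ?_
    subst hx hy hz
    linear_combination h
  have hw' : w = 2 / ((1 + b ^ 2) + a ^ 2) := by rw [eq_div_iff hQ, hwQ]
  subst hx hy hz
  refine ⟨?_, by rw [hw'], ?_⟩ <;> rw [hw'] <;> ring

theorem stmt5 (v1 v2 v3 : ℝ → ℝ)
    (hsol : SolvesCircularTractrix 1 v1 v2 v3)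
    (hunit : ∀ s : ℝ, (v1 s) ^ 2 + (v2 s) ^ 2 + (v3 s) ^ 2 = 1) :
    (∃ c₂ c₃ : ℝ, ∀ s : ℝ,
      v1 s = -(2 * (s + c₃)) / ((1 + c₂ ^ 2) + (s + c₃) ^ 2) ∧
      v2 s = 1 - 2 / ((1 + c₂ ^ 2) + (s + c₃) ^ 2) ∧
      v3 s = 2 * c₂ / ((1 + c₂ ^ 2) + (s + c₃) ^ 2)) ∨
    (∀ s : ℝ, v1 s = 0 ∧ v2 s = 1 ∧ v3 s = 0) := by
  obtain ⟨h1, h2, h3⟩ := hsol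
  set w : ℝ → ℝ := fun s => 1 - v2 s
  have hw : ∀ s, HasDerivAt w (v1 s * w s) s := fun s =>
    ((hasDerivAt_const s 1).sub (h2 s)).congr_deriv (by simp only [w]; ring)
  have hv1 : Continuous v1 := continuous_iff_continuousAt.mpr fun s => (h1 s).continuousAt
  rcases forall_eq_zero_or_forall_ne_zero_of_hasDerivAt_mul hv1 hw with hw_zero | hw_ne
  · right
    intro s
    have hv2 : v2 s = 1 := by linarith [hw_zero s, show w s = 1 - v2 s from rfl]
    refine ⟨?_, hv2, ?_⟩ <;> nlinarith [hunit s, sq_nonneg (v1 s), sq_nonneg (v3 s)]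
  · left
    have hu : ∀ s, HasDerivAt (fun s => v1 s / w s) (-1) s := fun s =>
      hasDerivAt_div_of_hasDerivAt_mul_add ((h1 s).congr_deriv (by simp only [w]; ring))
        (hw s) (hw_ne s)
    have ht : ∀ s, HasDerivAt (fun s => v3 s / w s) 0 s := fun s =>
      hasDerivAt_div_of_hasDerivAt_mul_add ((h3 s).congr_deriv (by ring)) (hw s) (hw_ne s)
    refine ⟨v3 0 / w 0, -(v1 0 / w 0), fun s => eq_div_of_sphere (hw_ne s) ?_
      (by simp only [w]; ring) ?_ (hunit s)⟩
    · rw [eq_add_mul_mul_of_hasDerivAt_div hw_ne hu s]; ring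
    · rw [eq_add_mul_mul_of_hasDerivAt_div hw_ne ht s]; ring
end

section
/- Let 0 < r < 1, set λ = √(1 − r²)/r, and let c₁, c₂, c₃ ∈ ℝ satisfy c₁² − c₂² = 1. Define D(s) = c₁/r + cos(λs + c₃) and v¹(s) = λ·sin(λs + c₃)/D(s), v²(s) = (c₁ + (1/r)·cos(λs + c₃))/D(s), v³(s) = λ·c₂/D(s). Then D(s) ≠ 0 for every s ∈ ℝ (since |c₁|/r > 1), and (v¹, v², v³) solves the circular-tractrix ODE system with parameter r, including the unit-length constraint (v¹(s))² + (v²(s))² + (v³(s))² = 1 for all s ∈ ℝ. -/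
/-!
Write `C s = cos (λ s + c₃)` and `S s = sin (λ s + c₃)`, so that `C' = -λ S` and `S' = λ C`.
Each `vⁱ` is a quotient by `D = c₁ / r + C`, and after the quotient rule each equation of the
system becomes a polynomial identity in `C`, `S`, `c₁`, `c₂`, `r` modulo `r² λ² = 1 - r²` alone;
the unit-length constraint additionally uses `C² + S² = 1` and `c₁² - c₂² = 1`.
`D` never vanishes because `|c₁ / r| > |c₁| ≥ 1 ≥ |C|`.
-/

open Real

theorem add_cos_ne_zero {a : ℝ} (ha : 1 < |a|) (θ : ℝ) : a + cos θ ≠ 0 := by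
  intro h
  have : |a| = |cos θ| := by rw [eq_neg_of_add_eq_zero_left h, abs_neg]
  linarith [abs_cos_le_one θ]

theorem one_lt_abs_div_of_one_le_sq {a r : ℝ} (hr0 : 0 < r) (hr1 : r < 1) (ha : 1 ≤ a ^ 2) :
    1 < |a / r| := by
  have ha' : 1 ≤ |a| := one_le_sq_iff_one_le_abs a |>.mp ha
  rw [abs_div, abs_of_pos hr0, lt_div_iff₀ hr0]
  linarith

theorem add_mul_ne_zero_of_div_add_ne_zero {a r x : ℝ} (hr : r ≠ 0) (h : a / r + x ≠ 0) :
    a + r * x ≠ 0 := by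
  rw [show a + r * x = r * (a / r + x) by field_simp]
  exact mul_ne_zero hr h

theorem sq_mul_sq_sqrt_one_sub_sq_div {r : ℝ} (hr : r ≠ 0) (hr1 : r ^ 2 ≤ 1) :
    r ^ 2 * (√(1 - r ^ 2) / r) ^ 2 = 1 - r ^ 2 := by
  rw [div_pow, sq_sqrt (by linarith)]
  field_simp

section RotatingPair

variable {r c₁ c₂ lam : ℝ} {C S : ℝ → ℝ}

theorem solvesCircularTractrix_of_rotating (hr : r ≠ 0) (hlam : r ^ 2 * lam ^ 2 = 1 - r ^ 2)
    (hC : ∀ s, HasDerivAt C (-S s * lam) s) (hS : ∀ s, HasDerivAt S (C s * lam) s)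
    (hD : ∀ s, c₁ / r + C s ≠ 0) :
    SolvesCircularTractrix r (fun s ↦ lam * S s / (c₁ / r + C s))
      (fun s ↦ (c₁ + 1 / r * C s) / (c₁ / r + C s)) (fun s ↦ lam * c₂ / (c₁ / r + C s)) := by
  have hD' s := add_mul_ne_zero_of_div_add_ne_zero hr (hD s)
  have hDd s : HasDerivAt (fun s ↦ c₁ / r + C s) (-S s * lam) s := (hC s).const_add _
  refine ⟨fun s ↦ ?_, fun s ↦ ?_, fun s ↦ ?_⟩
  · refine (((hS s).const_mul lam).div (hDd s) (hD s)).congr_deriv ?_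
    field_simp [hD' s, mul_comm (C s) r]
    linear_combination (C s * (c₁ + r * C s)) * hlam
  · refine ((((hC s).const_mul (1 / r)).const_add c₁).div (hDd s) (hD s)).congr_deriv ?_
    field_simp [hD' s]
    ring
  · refine ((hasDerivAt_const s (lam * c₂)).div (hDd s) (hD s)).congr_deriv ?_
    field_simp [hD' s]
    ring

theorem sq_add_sq_add_sq_div_eq_one (hr : r ≠ 0) (hlam : r ^ 2 * lam ^ 2 = 1 - r ^ 2)
    (hc : c₁ ^ 2 - c₂ ^ 2 = 1) {x y : ℝ} (hxy : x ^ 2 + y ^ 2 = 1) (hD : c₁ / r + x ≠ 0) :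
    (lam * y / (c₁ / r + x)) ^ 2 + ((c₁ + 1 / r * x) / (c₁ / r + x)) ^ 2
      + (lam * c₂ / (c₁ / r + x)) ^ 2 = 1 := by
  field_simp [add_mul_ne_zero_of_div_add_ne_zero hr hD]
  linear_combination (y ^ 2 + c₂ ^ 2) * hlam + (1 - r ^ 2) * hxy + (r ^ 2 - 1) * hc

end RotatingPair

theorem stmt6 (r c₁ c₂ c₃ lam : ℝ) (hr0 : 0 < r) (hr1 : r < 1)
    (hc : c₁ ^ 2 - c₂ ^ 2 = 1)
    (hlam : lam = Real.sqrt (1 - r ^ 2) / r)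
    (D v1 v2 v3 : ℝ → ℝ)
    (hD : ∀ s, D s = c₁ / r + Real.cos (lam * s + c₃))
    (hv1 : ∀ s, v1 s = lam * Real.sin (lam * s + c₃) / D s)
    (hv2 : ∀ s, v2 s = (c₁ + (1 / r) * Real.cos (lam * s + c₃)) / D s)
    (hv3 : ∀ s, v3 s = lam * c₂ / D s) :
    (∀ s : ℝ, D s ≠ 0) ∧
    SolvesCircularTractrix r v1 v2 v3 ∧
    (∀ s : ℝ, (v1 s) ^ 2 + (v2 s) ^ 2 + (v3 s) ^ 2 = 1) := by
  have hlam2 : r ^ 2 * lam ^ 2 = 1 - r ^ 2 :=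
    hlam ▸ sq_mul_sq_sqrt_one_sub_sq_div hr0.ne' (by nlinarith)
  have hc₁ : 1 < |c₁ / r| := one_lt_abs_div_of_one_le_sq hr0 hr1 (by nlinarith)
  have hDne s : D s ≠ 0 := hD s ▸ add_cos_ne_zero hc₁ _
  obtain rfl : D = _ := funext hD
  obtain rfl : v1 = _ := funext hv1
  obtain rfl : v2 = _ := funext hv2
  obtain rfl : v3 = _ := funext hv3
  have hphase s : HasDerivAt (fun s ↦ lam * s + c₃) lam s := by
    simpa using ((hasDerivAt_id s).const_mul lam).add_const c₃
  exact ⟨hDne,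
    solvesCircularTractrix_of_rotating hr0.ne' hlam2 (fun s ↦ (hphase s).cos)
      (fun s ↦ (hphase s).sin) hDne,
    fun s ↦ sq_add_sq_add_sq_div_eq_one hr0.ne' hlam2 hc (cos_sq_add_sin_sq _) (hDne s)⟩
end

section
/- Let n ≥ 2, let A : ℝ → Matrix (Fin n) (Fin n) ℝ be a continuous function taking values in skew-symmetric matrices, and let v : ℝ → ℝⁿ be a differentiable function satisfying v′(s) = A(s)·v(s) − e₁ + v¹(s)·v(s) for all s, where e₁ is the first standard basis vector and v¹(s) is the first component of v(s). If ‖v(0)‖² = 1, then ‖v(s)‖² = 1 for all s ∈ ℝ. -/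
/-!
The skew-symmetric term `A v` is orthogonal to `v`, so `u = ‖v‖² - 1` satisfies the scalar
linear equation `u' = 2 v¹ u`. Multiplying by the integrating factor `exp (-∫ 2 v¹)` gives
a function with zero derivative, hence `u s = exp (∫₀ˢ 2 v¹) u 0 = 0`.
-/

open Matrix

theorem Matrix.dotProduct_mulVec_self_eq_zero_of_transpose_eq_neg {ι R : Type*} [Fintype ι]
    [CommRing R] [IsAddTorsionFree R] {A : Matrix ι ι R} (hA : Aᵀ = -A) (w : ι → R) :
    w ⬝ᵥ A *ᵥ w = 0 := by
  rw [← self_eq_neg]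
  calc w ⬝ᵥ A *ᵥ w = Aᵀ *ᵥ w ⬝ᵥ w := by rw [dotProduct_mulVec, mulVec_transpose]
    _ = -(w ⬝ᵥ A *ᵥ w) := by rw [hA, neg_mulVec, neg_dotProduct, dotProduct_comm]

theorem eq_exp_integral_smul_of_hasDerivAt {E : Type*} [NormedAddCommGroup E] [NormedSpace ℝ E]
    {a : ℝ → ℝ} {u : ℝ → E} (ha : Continuous a) (hu : ∀ t, HasDerivAt u (a t • u t) t) (s : ℝ) :
    u s = Real.exp (∫ t in (0 : ℝ)..s, a t) • u 0 := by
  set F : ℝ → ℝ := fun s => ∫ t in (0 : ℝ)..s, a t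
  have hF (t : ℝ) : HasDerivAt F (a t) t :=
    intervalIntegral.integral_hasDerivAt_right (ha.intervalIntegrable 0 t)
      (ha.stronglyMeasurableAtFilter _ _) ha.continuousAt
  have hconst (t : ℝ) : HasDerivAt (fun t => Real.exp (-F t) • u t) 0 t := by
    refine (((hF t).neg.exp).smul (hu t)).congr_deriv ?_
    rw [smul_smul, ← add_smul]
    simp
  have key := is_const_of_deriv_eq_zero (fun t => (hconst t).differentiableAt)
    (fun t => (hconst t).deriv) s 0
  simp only [F, intervalIntegral.integral_same, neg_zero, Real.exp_zero, one_smul] at key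
  rw [← key, smul_smul, ← Real.exp_add, add_neg_cancel, Real.exp_zero, one_smul]

theorem EuclideanSpace.inner_toLp_mulVec_self_eq_zero {ι : Type*} [Fintype ι]
    {A : Matrix ι ι ℝ} (hA : Aᵀ = -A) (w : EuclideanSpace ℝ ι) :
    inner ℝ w (WithLp.toLp 2 (A *ᵥ w)) = 0 := by
  rw [EuclideanSpace.inner_eq_star_dotProduct, star_trivial, dotProduct_comm]
  exact dotProduct_mulVec_self_eq_zero_of_transpose_eq_neg hA _

theorem stmt10 (n : ℕ) (hn : 2 ≤ n)
    (A : ℝ → Matrix (Fin n) (Fin n) ℝ)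
    (hA : ∀ s : ℝ, (A s).transpose = -(A s))
    (v : ℝ → EuclideanSpace ℝ (Fin n))
    (hv : ∀ s : ℝ, HasDerivAt v
      ((WithLp.equiv 2 (Fin n → ℝ)).symm
        ((A s).mulVec (v s) - Pi.single (⟨0, by omega⟩ : Fin n) (1 : ℝ))
        + (v s ⟨0, by omega⟩) • (v s)) s)
    (h0 : ‖v 0‖ ^ 2 = 1) :
    ∀ s : ℝ, ‖v s‖ ^ 2 = 1 := by
  set i₀ : Fin n := ⟨0, by omega⟩
  have hu (t : ℝ) : HasDerivAt (fun t => ‖v t‖ ^ 2 - 1) ((2 * v t i₀) • (‖v t‖ ^ 2 - 1)) t := by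
    refine ((hv t).norm_sq.sub_const 1).congr_deriv ?_
    rw [WithLp.equiv_symm_apply, WithLp.toLp_sub, PiLp.toLp_single, inner_add_right,
      inner_sub_right, EuclideanSpace.inner_toLp_mulVec_self_eq_zero (hA t),
      EuclideanSpace.inner_single_right, inner_smul_right, real_inner_self_eq_norm_sq]
    simp only [conj_trivial, smul_eq_mul]
    ring
  have ha : Continuous fun t => 2 * v t i₀ :=
    continuous_const.mul ((PiLp.continuous_apply 2 _ i₀).comp
      (Differentiable.continuous fun t => (hv t).differentiableAt))
  intro s
  have hus := eq_exp_integral_smul_of_hasDerivAt ha hu s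
  rwa [h0, sub_self, smul_zero, sub_eq_zero] at hus
end

section
/- Let r > 0 and let differentiable functions v¹, v², v³ : ℝ → ℝ solve the circular-tractrix ODE system with parameter r together with the unit-length constraint (v¹(s))² + (v²(s))² + (v³(s))² = 1 for all s. Define the curves f̃, f, w : ℝ → ℝ³ by f̃(s) = (r·cos(s/r), r·sin(s/r), 0), w(s) = (−v¹(s)·sin(s/r) − v²(s)·cos(s/r), v¹(s)·cos(s/r) − v²(s)·sin(s/r), v³(s)), and f(s) = f̃(s) + w(s). Then for all s ∈ ℝ: ‖f(s) − f̃(s)‖ = 1, f′(s) = v¹(s)·(f(s) − f̃(s)), the cross product (f(s) − f̃(s)) × f′(s) = 0, and ‖f′(s)‖ = |v¹(s)|; in particular f is a tractrix with directrix the circle f̃, and f is regular exactly at points where v¹(s) ≠ 0. -/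
open Real WithLp

theorem HasDerivAt.toLp {𝕜 ι : Type*} [NontriviallyNormedField 𝕜] [Fintype ι] {E : ι → Type*}
    [∀ i, NormedAddCommGroup (E i)] [∀ i, NormedSpace 𝕜 (E i)] (p : ENNReal) [Fact (1 ≤ p)]
    {g : 𝕜 → ∀ i, E i} {g' : ∀ i, E i} {s : 𝕜} (h : HasDerivAt g g' s) :
    HasDerivAt (fun t => toLp p (g t)) (toLp p g') s :=
  (PiLp.hasFDerivAt_toLp p (g s)).comp_hasDerivAt s h

theorem EuclideanSpace.hasDerivAt_vec3 {a b c : ℝ → ℝ} {a' b' c' s : ℝ} (ha : HasDerivAt a a' s)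
    (hb : HasDerivAt b b' s) (hc : HasDerivAt c c' s) :
    HasDerivAt (fun t => toLp 2 ![a t, b t, c t]) (toLp 2 ![a', b', c']) s := by
  refine HasDerivAt.toLp 2 (hasDerivAt_pi.2 fun i => ?_)
  fin_cases i <;> assumption

theorem EuclideanSpace.norm_vec3 (a b c : ℝ) :
    ‖(toLp 2 ![a, b, c] : EuclideanSpace ℝ (Fin 3))‖ = √(a ^ 2 + b ^ 2 + c ^ 2) := by
  simp [EuclideanSpace.norm_eq, Fin.sum_univ_three]

theorem EuclideanSpace.norm_rotate_vec3 (θ a b c : ℝ) :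
    ‖(toLp 2 ![-a * sin θ - b * cos θ, a * cos θ - b * sin θ, c] : EuclideanSpace ℝ (Fin 3))‖ =
      √(a ^ 2 + b ^ 2 + c ^ 2) := by
  rw [EuclideanSpace.norm_vec3]
  congr 1
  linear_combination (a ^ 2 + b ^ 2) * sin_sq_add_cos_sq θ

theorem hasDerivAt_circle {r : ℝ} (hr : r ≠ 0) {ft : ℝ → EuclideanSpace ℝ (Fin 3)}
    (hft : ∀ t, ft t = toLp 2 ![r * cos (t / r), r * sin (t / r), 0]) (s : ℝ) :
    HasDerivAt ft (toLp 2 ![-sin (s / r), cos (s / r), 0]) s := by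
  have hθ : HasDerivAt (fun t => t / r) (1 / r) s := (hasDerivAt_id s).div_const r
  rw [funext hft]
  refine EuclideanSpace.hasDerivAt_vec3 ?_ ?_ (hasDerivAt_const s 0)
  · exact (((hasDerivAt_cos _).comp s hθ).const_mul r).congr_deriv (by field_simp)
  · exact (((hasDerivAt_sin _).comp s hθ).const_mul r).congr_deriv (by field_simp)

theorem SolvesCircularTractrix.hasDerivAt_offset {r : ℝ} {v1 v2 v3 : ℝ → ℝ}
    (hsol : SolvesCircularTractrix r v1 v2 v3) {w : ℝ → EuclideanSpace ℝ (Fin 3)}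
    (hw : ∀ t, w t = toLp 2 ![-(v1 t) * sin (t / r) - v2 t * cos (t / r),
      v1 t * cos (t / r) - v2 t * sin (t / r), v3 t]) (s : ℝ) :
    HasDerivAt w (v1 s • w s - toLp 2 ![-sin (s / r), cos (s / r), 0]) s := by
  obtain ⟨hv1, hv2, hv3⟩ := hsol
  have hθ : HasDerivAt (fun t => t / r) (1 / r) s := (hasDerivAt_id s).div_const r
  have hcos := (hasDerivAt_cos _).comp s hθ
  have hsin := (hasDerivAt_sin _).comp s hθ
  rw [funext hw]
  refine (EuclideanSpace.hasDerivAt_vec3 (((hv1 s).neg.mul hsin).sub ((hv2 s).mul hcos))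
    (((hv1 s).mul hcos).sub ((hv2 s).mul hsin)) (hv3 s)).congr_deriv (PiLp.ext fun i => ?_)
  fin_cases i <;>
    simp only [Fin.reduceFinMk, Fin.isValue, Function.comp_apply, Pi.neg_apply, PiLp.sub_apply,
      PiLp.smul_apply, smul_eq_mul, Matrix.cons_val_zero, Matrix.cons_val_one, Matrix.cons_val] <;> ring

theorem stmt12 (r : ℝ) (hr : 0 < r) (v1 v2 v3 : ℝ → ℝ)
    (hsol : SolvesCircularTractrix r v1 v2 v3)
    (hunit : ∀ s : ℝ, (v1 s) ^ 2 + (v2 s) ^ 2 + (v3 s) ^ 2 = 1)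
    (ft w f : ℝ → EuclideanSpace ℝ (Fin 3))
    (hft : ∀ s, ft s = (WithLp.equiv 2 (Fin 3 → ℝ)).symm
      ![r * Real.cos (s / r), r * Real.sin (s / r), 0])
    (hw : ∀ s, w s = (WithLp.equiv 2 (Fin 3 → ℝ)).symm
      ![-(v1 s) * Real.sin (s / r) - v2 s * Real.cos (s / r),
        v1 s * Real.cos (s / r) - v2 s * Real.sin (s / r),
        v3 s])
    (hf : ∀ s, f s = ft s + w s) :
    ∀ s : ℝ,
      ‖f s - ft s‖ = 1 ∧
      HasDerivAt f (v1 s • (f s - ft s)) s ∧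
      crossProduct (WithLp.equiv 2 (Fin 3 → ℝ) (f s - ft s))
        (WithLp.equiv 2 (Fin 3 → ℝ) (v1 s • (f s - ft s))) = 0 ∧
      ‖v1 s • (f s - ft s)‖ = |v1 s| := by
  intro s
  have hoffset : f s - ft s = w s := by rw [hf s, add_sub_cancel_left]
  have hnorm : ‖w s‖ = 1 := by
    rw [hw s, equiv_symm_apply, EuclideanSpace.norm_rotate_vec3, hunit, sqrt_one]
  refine ⟨by rw [hoffset, hnorm], ?_, ?_, ?_⟩
  · have hderiv := (hasDerivAt_circle hr.ne' hft s).add (hsol.hasDerivAt_offset hw s)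
    rw [add_sub_cancel, ← hoffset] at hderiv
    exact hderiv.congr_of_eventuallyEq (.of_forall hf)
  · simp only [hoffset, equiv_apply, ofLp_smul, map_smul, cross_self, smul_zero]
  · rw [norm_smul, hoffset, hnorm, mul_one, norm_eq_abs]
end
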